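/- arXiv:0807.3519 — 5 statements merged into one kernel-verified Lean document; each statement's English description precedes it below -/
import Mathlib

section
/- For every word w over a finite alphabet A, the adjoint l* of the left-normed Lie bracketing satisfies l*(w̃) = (-1)^{|w|+1} l*(w), where w̃ denotes the reversal of w. -/
open MonoidAlgebra

/-- The word `w` viewed as a monomial in the free associative algebra `K⟨A⟩`. -/
noncomputable def word (K : Type*) [CommRing K] {A : Type*} (w : List A) :
    MonoidAlgebra K (FreeMonoid A) :=
  MonoidAlgebra.single (FreeMonoid.ofList w) 1

/-- The adjoint `l*` of the left-normed Lie bracketing, defined by the recursion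
`l*(ε) = 0`, `l*(a) = a`, `l*(aub) = l*(au)·b − l*(ub)·a`. -/
noncomputable def lstar (K : Type*) [CommRing K] {A : Type*} :
    List A → MonoidAlgebra K (FreeMonoid A)
  | [] => 0
  | [a] => word K [a]
  | a :: b :: r =>
      lstar K (a :: (b :: r).dropLast) * word K [(b :: r).getLast (by simp)]
        - lstar K (b :: r) * word K [a]
  termination_by w => w.length
  decreasing_by
    · simp [List.length_dropLast]
    · simp

lemma lstar_cons {K : Type*} [CommRing K] {A : Type*} (a : A) (s : List A) (h : s ≠ []) :
    lstar K (a :: s) =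
      lstar K (a :: s.dropLast) * word K [s.getLast h] - lstar K s * word K [a] := by
  match s with
  | b :: r => rw [lstar]

lemma lstar_reverse_aux {K : Type*} [CommRing K] {A : Type*} :
    ∀ (n : ℕ) (w : List A), w.length ≤ n →
      lstar K w.reverse = ((-1 : K) ^ (w.length + 1)) • lstar K w := by
  intro n
  induction n with
  | zero =>
    intro w hw
    have : w = [] := List.eq_nil_of_length_eq_zero (Nat.le_zero.mp hw)
    subst this; simp [lstar]
  | succ n ih =>
    intro w hw
    match w with
    | [] => simp [lstar]
    | [a] => simp [lstar]
    | a :: b :: r =>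
      set s : List A := b :: r with hsdef
      have hs : s ≠ [] := by simp [hsdef]
      set m : List A := s.dropLast with hmdef
      set x : A := s.getLast hs with hxdef
      have hmx : m ++ [x] = s := List.dropLast_append_getLast hs
      have hlen : s.length = m.length + 1 := by rw [← hmx]; simp
      have hsn : s.length ≤ n := by
        have : s.length + 1 ≤ n + 1 := by simpa using hw
        omega
      have hrev : (a :: s).reverse = x :: (m.reverse ++ [a]) := by
        rw [← hmx]; simp
      have hne : m.reverse ++ [a] ≠ [] := by simp
      rw [hrev, lstar_cons x _ hne, lstar_cons a s hs]
      have h1 : (m.reverse ++ [a]).dropLast = m.reverse := List.dropLast_concat ..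
      have h2 : (m.reverse ++ [a]).getLast hne = a := List.getLast_concat ..
      rw [h1, h2]
      have h3 : x :: m.reverse = s.reverse := by rw [← hmx]; simp
      have h4 : m.reverse ++ [a] = (a :: m).reverse := by simp
      rw [h3, h4]
      have ihs : lstar K s.reverse = ((-1 : K) ^ (s.length + 1)) • lstar K s :=
        ih s hsn
      have iham : lstar K (a :: m).reverse
          = ((-1 : K) ^ ((a :: m).length + 1)) • lstar K (a :: m) :=
        ih (a :: m) (by simp; omega)
      rw [ihs, iham]
      have hL : (a :: s).length + 1 = s.length + 2 := by simp
      have hL2 : (a :: m).length + 1 = s.length + 1 := by simp [hlen]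
      rw [hL, hL2]
      simp only [← hmdef, ← hxdef]
      have hp : ((-1 : K)) ^ (s.length + 2) = (-1 : K) ^ s.length := by ring
      rw [smul_mul_assoc, smul_mul_assoc, smul_sub, hp, pow_succ]
      simp only [mul_neg_one, neg_smul]
      abel

/-- `l*(w̃) = (-1)^{|w|+1} l*(w)`. -/
theorem lstar_reverse {K : Type*} [CommRing K] {A : Type*} [Fintype A] (w : List A) :
    lstar K w.reverse = ((-1 : K) ^ (w.length + 1)) • lstar K w := by
  exact lstar_reverse_aux w.length w le_rfl
end

section
/- The kernel of the linear endomorphism l* of K⟨A⟩ equals the orthogonal complement of the free Lie algebra L_K(A) with respect to the canonical scalar product for which the set of words A* is an orthonormal basis. -/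
/-! Both `l*(u)` and the left-normed bracket `l(v)` are computed by stripping letters off the ends
of a word, and the two recursions mirror each other: for `u = a s z` and `v = w b`, the coefficient
of `v` in `l*(u)` is `[b = z] (l*(a s), w) - [b = a] (l*(s z), w)`, and that of `u` in
`l(v) = l(w) b - b l(w)` is `[z = b] (l(w), a s) - [a = b] (l(w), s z)`. By induction on `v`,
`(l*(u), v) = (l(v), u)`, so `(l*(P), v) = (P, l(v))` and `l*(P) = 0` iff `P` is orthogonal to
every `l(v)`. By the Jacobi identity the span of the `l(v)` is closed under the bracket, so it is `L_K(A)`.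
-/

open MonoidAlgebra

attribute [local instance 100] LieRing.ofAssociativeRing

/-- The linear extension of `l*` to the whole of `K⟨A⟩`. -/
noncomputable def lstarExt (K : Type*) [CommRing K] {A : Type*}
    (P : MonoidAlgebra K (FreeMonoid A)) : MonoidAlgebra K (FreeMonoid A) :=
  P.coeff.sum fun w c => c • lstar K (FreeMonoid.toList w)

/-- The free Lie algebra `L_K(A)`: the Lie subalgebra of `K⟨A⟩` generated by the letters. -/
noncomputable def freeLie (K : Type*) [CommRing K] (A : Type*) :
    LieSubalgebra K (MonoidAlgebra K (FreeMonoid A)) :=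
  LieSubalgebra.lieSpan K _ {P | ∃ a : A, P = word K [a]}

/-- The canonical scalar product on `K⟨A⟩` for which the words form an orthonormal basis. -/
noncomputable def scal {K : Type*} [CommRing K] {A : Type*}
    (P Q : MonoidAlgebra K (FreeMonoid A)) : K :=
  P.coeff.sum fun w c => c * Q.coeff w

open FreeMonoid

section Coefficients

variable {K : Type*} [CommRing K] {A : Type*} [DecidableEq A]

theorem coeff_word_ofList (v u : List A) :
    (word K v).coeff (ofList u) = if u = v then 1 else 0 := by
  classical
  rw [word, MonoidAlgebra.coeff_single, Finsupp.single_apply]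
  exact if_congr (ofList.injective.eq_iff.trans eq_comm) rfl rfl

theorem coeff_mul_word_singleton (f : MonoidAlgebra K (FreeMonoid A)) (a : A) (v : List A) :
    (f * word K [a]).coeff (ofList v) =
      if v.getLast? = some a then f.coeff (ofList v.dropLast) else 0 := by
  rcases List.eq_nil_or_concat v with rfl | ⟨s, b, rfl⟩
  · exact MonoidAlgebra.coeff_mul_single_of_forall_mul_ne _ _ fun d h => by
      simpa [length_mul] using congrArg length h
  · simp only [List.concat_eq_append, List.getLast?_append, List.getLast?_singleton,
      Option.some_or, Option.some.injEq, List.dropLast_concat]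
    split_ifs with hba
    · subst hba
      rw [word, MonoidAlgebra.coeff_mul_single_eq_coeff_mul (ofList s), mul_one]
      intro m _
      exact List.append_left_inj [b]
    · refine MonoidAlgebra.coeff_mul_single_of_forall_mul_ne _ _ fun d h => hba ?_
      exact (List.append_inj' h rfl).2 |> List.singleton_injective |>.symm

theorem coeff_word_singleton_mul (f : MonoidAlgebra K (FreeMonoid A)) (a : A) (v : List A) :
    (word K [a] * f).coeff (ofList v) =
      if v.head? = some a then f.coeff (ofList v.tail) else 0 := by
  rcases v with _ | ⟨b, s⟩
  · exact MonoidAlgebra.coeff_single_mul_of_forall_mul_ne _ _ fun d h => by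
      simpa [length_mul] using congrArg length h
  · simp only [List.head?_cons, Option.some.injEq, List.tail_cons]
    split_ifs with hba
    · subst hba
      rw [word, MonoidAlgebra.coeff_single_mul_eq_mul_coeff (ofList s), one_mul]
      intro m _
      exact List.cons_inj_right b
    · exact MonoidAlgebra.coeff_single_mul_of_forall_mul_ne _ _ fun d h =>
        hba (List.cons_eq_cons.mp h).1.symm

end Coefficients

section Adjoint

variable {K : Type*} [CommRing K] {A : Type*}

noncomputable def leftNormedBracket (K : Type*) [CommRing K] {A : Type*} :
    List A → MonoidAlgebra K (FreeMonoid A)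
  | [] => 0
  | a :: v => v.foldl (fun x b => ⁅x, word K [b]⁆) (word K [a])

theorem leftNormedBracket_cons_append_singleton (a b : A) (w : List A) :
    leftNormedBracket K (a :: (w ++ [b])) = ⁅leftNormedBracket K (a :: w), word K [b]⁆ :=
  List.foldl_append ..

theorem lstar_cons_append_singleton (a z : A) (s : List A) :
    lstar K (a :: (s ++ [z])) =
      lstar K (a :: s) * word K [z] - lstar K (s ++ [z]) * word K [a] := by
  obtain ⟨b, r, h⟩ : ∃ b r, s ++ [z] = b :: r := List.exists_cons_of_ne_nil (by simp)
  rw [h, lstar]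
  simp only [← h, List.dropLast_concat, List.getLast_concat]

variable [DecidableEq A]

theorem coeff_lstar_nil (u : List A) : (lstar K u).coeff (ofList []) = 0 := by
  induction u using List.bidirectionalRec with
  | nil => rw [lstar]; rfl
  | singleton a => rw [lstar, coeff_word_ofList, if_neg (List.cons_ne_nil a []).symm]
  | cons_append a s z _ =>
    simp only [lstar_cons_append_singleton, MonoidAlgebra.coeff_sub, Finsupp.sub_apply,
      coeff_mul_word_singleton, List.getLast?_nil, reduceCtorEq, if_false, sub_self]

theorem coeff_lstar (u v : List A) :
    (lstar K u).coeff (ofList v) = (leftNormedBracket K v).coeff (ofList u) := by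
  rcases v with _ | ⟨a, v⟩
  · rw [coeff_lstar_nil]; rfl
  induction v using List.reverseRecOn generalizing u with
  | nil =>
    -- `ofList` must stay applied to lists for the coefficient lemmas to fire.
    induction u using List.bidirectionalRec <;>
      simp [lstar, lstar_cons_append_singleton, leftNormedBracket, coeff_word_ofList,
        coeff_mul_word_singleton, coeff_lstar_nil, eq_comm (a := a),
        -ofList_cons, -ofList_append, -ofList_nil]
  | append_singleton w b ih =>
    rw [leftNormedBracket_cons_append_singleton, Ring.lie_def]
    induction u using List.bidirectionalRec <;>
      simp [lstar, lstar_cons_append_singleton, coeff_word_ofList, coeff_mul_word_singleton,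
        coeff_word_singleton_mul, ih, List.getLast?_cons, List.dropLast_cons_of_ne_nil,
        eq_comm (a := b), -ofList_cons, -ofList_append, -ofList_nil]

end Adjoint

theorem lie_mem_span_of_forall_mem {R L : Type*} [CommRing R] [LieRing L] [LieAlgebra R L]
    {s : Set L} {y : L} (h : ∀ x ∈ s, ⁅x, y⁆ ∈ Submodule.span R s) {x : L}
    (hx : x ∈ Submodule.span R s) : ⁅x, y⁆ ∈ Submodule.span R s := by
  induction hx using Submodule.span_induction with
  | mem x hx => exact h x hx
  | zero => simp
  | add x x' _ _ hx hx' => simpa only [add_lie] using add_mem hx hx'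
  | smul c x _ hx => simpa only [smul_lie] using Submodule.smul_mem _ c hx

section FreeLie

variable {K : Type*} [CommRing K] {A : Type*}

theorem leftNormedBracket_mem_freeLie (v : List A) : leftNormedBracket K v ∈ freeLie K A := by
  rcases v with _ | ⟨a, v⟩
  · exact zero_mem _
  induction v using List.reverseRecOn with
  | nil => exact LieSubalgebra.subset_lieSpan ⟨a, rfl⟩
  | append_singleton w b ih =>
    rw [leftNormedBracket_cons_append_singleton]
    exact (freeLie K A).lie_mem ih (LieSubalgebra.subset_lieSpan ⟨b, rfl⟩)

theorem lie_word_mem_span_leftNormedBracket {x : MonoidAlgebra K (FreeMonoid A)}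
    (hx : x ∈ Submodule.span K (Set.range (leftNormedBracket K))) (b : A) :
    ⁅x, word K [b]⁆ ∈ Submodule.span K (Set.range (leftNormedBracket K)) := by
  refine lie_mem_span_of_forall_mem ?_ hx
  rintro _ ⟨_ | ⟨a, w⟩, rfl⟩
  · simp [leftNormedBracket]
  · rw [← leftNormedBracket_cons_append_singleton]
    exact Submodule.subset_span ⟨_, rfl⟩

theorem lie_leftNormedBracket_mem_span {x : MonoidAlgebra K (FreeMonoid A)}
    (hx : x ∈ Submodule.span K (Set.range (leftNormedBracket K))) (v : List A) :
    ⁅x, leftNormedBracket K v⁆ ∈ Submodule.span K (Set.range (leftNormedBracket K)) := by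
  rcases v with _ | ⟨a, v⟩
  · simp [leftNormedBracket]
  induction v using List.reverseRecOn generalizing x with
  | nil => exact lie_word_mem_span_leftNormedBracket hx a
  | append_singleton w b ih =>
    rw [leftNormedBracket_cons_append_singleton, leibniz_lie,
      ← lie_skew (leftNormedBracket K (a :: w))]
    exact add_mem (lie_word_mem_span_leftNormedBracket (ih hx) b)
      (neg_mem (ih (lie_word_mem_span_leftNormedBracket hx b)))

theorem lie_mem_span_leftNormedBracket {x y : MonoidAlgebra K (FreeMonoid A)}
    (hx : x ∈ Submodule.span K (Set.range (leftNormedBracket K)))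
    (hy : y ∈ Submodule.span K (Set.range (leftNormedBracket K))) :
    ⁅x, y⁆ ∈ Submodule.span K (Set.range (leftNormedBracket K)) := by
  rw [← lie_skew, neg_mem_iff]
  refine lie_mem_span_of_forall_mem ?_ hy
  rintro _ ⟨v, rfl⟩
  rw [← lie_skew, neg_mem_iff]
  exact lie_leftNormedBracket_mem_span hx v

theorem freeLie_toSubmodule :
    (freeLie K A).toSubmodule = Submodule.span K (Set.range (leftNormedBracket K)) := by
  refine le_antisymm ?_ <|
    Submodule.span_le.mpr (Set.range_subset_iff.mpr leftNormedBracket_mem_freeLie)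
  let S : LieSubalgebra K (MonoidAlgebra K (FreeMonoid A)) :=
    { Submodule.span K (Set.range (leftNormedBracket K)) with
      lie_mem' := lie_mem_span_leftNormedBracket }
  change freeLie K A ≤ S
  exact LieSubalgebra.lieSpan_le.mpr fun _ ⟨a, h⟩ => Submodule.subset_span ⟨[a], h.symm⟩

end FreeLie

section ScalarProduct

variable {K : Type*} [CommRing K] {A : Type*}

noncomputable def scalₗ (P : MonoidAlgebra K (FreeMonoid A)) :
    MonoidAlgebra K (FreeMonoid A) →ₗ[K] K where
  toFun := scal P
  map_add' Q₁ Q₂ := by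
    simp only [scal, MonoidAlgebra.coeff_add, Finsupp.add_apply, mul_add, Finsupp.sum_add]
  map_smul' c Q := by
    simp only [scal, MonoidAlgebra.coeff_smul_apply, smul_eq_mul, Finsupp.mul_sum,
      RingHom.id_apply]
    exact Finsupp.sum_congr fun _ _ => mul_left_comm ..

theorem coeff_lstarExt [DecidableEq A] (P : MonoidAlgebra K (FreeMonoid A)) (v : List A) :
    (lstarExt K P).coeff (ofList v) = scal P (leftNormedBracket K v) := by
  rw [lstarExt, scal, MonoidAlgebra.coeff_finsuppSum, Finsupp.sum_apply]
  refine Finsupp.sum_congr fun w _ => ?_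
  rw [MonoidAlgebra.coeff_smul_apply, smul_eq_mul, coeff_lstar]
  rfl

theorem lstarExt_eq_zero_iff (P : MonoidAlgebra K (FreeMonoid A)) :
    lstarExt K P = 0 ↔ ∀ v, scal P (leftNormedBracket K v) = 0 := by
  classical
  rw [← MonoidAlgebra.coeff_inj, Finsupp.ext_iff]
  exact toList.forall_congr_left.trans (forall_congr' fun v => by
    rw [toList_symm, coeff_lstarExt]; rfl)

end ScalarProduct

theorem ker_lstar_eq_orthogonal_general {K : Type*} [CommRing K] {A : Type*}
    (P : MonoidAlgebra K (FreeMonoid A)) :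
    lstarExt K P = 0 ↔ ∀ Q ∈ freeLie K A, scal P Q = 0 := by
  calc lstarExt K P = 0
      ↔ ∀ v, scalₗ P (leftNormedBracket K v) = 0 := lstarExt_eq_zero_iff P
    _ ↔ Submodule.span K (Set.range (leftNormedBracket K)) ≤ LinearMap.ker (scalₗ P) := by
      rw [Submodule.span_le, Set.range_subset_iff]; rfl
    _ ↔ ∀ Q ∈ freeLie K A, scal P Q = 0 := by
      rw [← freeLie_toSubmodule]; rfl

/-- `ker l* = L_K(A)^⊥`. -/
theorem ker_lstar_eq_orthogonal {K : Type*} [CommRing K] {A : Type*} [Fintype A]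
    (P : MonoidAlgebra K (FreeMonoid A)) :
    lstarExt K P = 0 ↔ ∀ Q ∈ freeLie K A, scal P Q = 0 :=
  ker_lstar_eq_orthogonal_general P
end

section
/- Let φ: A* → Σ* be a literal (letter-to-letter) surjective monoid morphism between free monoids on finite alphabets with |A| ≥ |Σ| ≥ 2. Then the algebra homomorphisms φ∘l*_A and l*_Σ∘φ from K⟨A⟩ to K⟨Σ⟩ coincide; in particular φ(ker l*_A) ⊆ ker l*_Σ. -/
open MonoidAlgebra

/-! A letter-to-letter morphism preserves word length and commutes with taking the first letter,
the last letter and `dropLast`, so it commutes with each step of the recursion defining `l*`;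
the statement for polynomials follows by linearity. -/

section

variable {K : Type*} [CommRing K] {A B : Type*}

theorem mapDomain_word (φ : A → B) (w : List A) :
    mapDomain (FreeMonoid.map φ) (word K w) = word K (w.map φ) := by
  rw [word, mapDomain_single]
  rfl

theorem mapDomain_lstar (φ : A → B) :
    ∀ w : List A, mapDomain (FreeMonoid.map φ) (lstar K w) = lstar K (w.map φ)
  | [] => by simp [lstar]
  | [a] => by simp only [lstar, mapDomain_word, List.map]
  | a :: b :: r => by
      have hdrop : (b :: r).dropLast.map φ = (φ b :: r.map φ).dropLast := List.map_dropLast ..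
      have hlast : φ ((b :: r).getLast (List.cons_ne_nil _ _)) =
          (φ b :: r.map φ).getLast (List.cons_ne_nil _ _) := (List.getLast_map ..).symm
      rw [List.map_cons, List.map_cons, lstar, lstar, ← mapDomainRingHom_apply, map_sub, map_mul,
        map_mul]
      simp only [mapDomainRingHom_apply, mapDomain_lstar φ (a :: (b :: r).dropLast),
        mapDomain_lstar φ (b :: r), mapDomain_word, List.map_cons, List.map_nil, hdrop, hlast]
  termination_by w => w.length

theorem lstarExt_mapDomain (φ : A → B) (P : MonoidAlgebra K (FreeMonoid A)) :
    lstarExt K (mapDomain (FreeMonoid.map φ) P) = mapDomain (FreeMonoid.map φ) (lstarExt K P) := by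
  rw [lstarExt, lstarExt, mapDomain_sum, coeff_mapDomain,
    Finsupp.sum_mapDomain_index (by simp) (fun _ _ _ => add_smul ..)]
  refine Finsupp.sum_congr fun w _ => ?_
  rw [mapDomain_smul, mapDomain_lstar, FreeMonoid.toList_map]

end

theorem literal_morphism_comm_lstar_general {K : Type*} [CommRing K] {A B : Type*}
    (φ : A → B) :
    (∀ P : MonoidAlgebra K (FreeMonoid A),
        MonoidAlgebra.mapDomain (fun x => FreeMonoid.map φ x) (lstarExt K P) =
          lstarExt K (MonoidAlgebra.mapDomain (fun x => FreeMonoid.map φ x) P)) ∧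
    (∀ P : MonoidAlgebra K (FreeMonoid A), lstarExt K P = 0 →
        lstarExt K (MonoidAlgebra.mapDomain (fun x => FreeMonoid.map φ x) P) = 0) :=
  ⟨fun P => (lstarExt_mapDomain φ P).symm,
    fun P hP => by rw [lstarExt_mapDomain, hP, mapDomain_zero]⟩

/-- for a literal surjective morphism `φ : A* → Σ*` (with `|A| ≥ |Σ| ≥ 2`),
the algebra maps `φ ∘ l*_A` and `l*_Σ ∘ φ` from `K⟨A⟩` to `K⟨Σ⟩` coincide; in particular
`φ(ker l*_A) ⊆ ker l*_Σ`. -/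
theorem literal_morphism_comm_lstar {K : Type*} [CommRing K] {A B : Type*}
    [Fintype A] [Fintype B] (φ : A → B) (hφ : Function.Surjective φ)
    (hB : ∃ b₁ b₂ : B, b₁ ≠ b₂) :
    (∀ P : MonoidAlgebra K (FreeMonoid A),
        MonoidAlgebra.mapDomain (fun x => FreeMonoid.map φ x) (lstarExt K P) =
          lstarExt K (MonoidAlgebra.mapDomain (fun x => FreeMonoid.map φ x) P)) ∧
    (∀ P : MonoidAlgebra K (FreeMonoid A), lstarExt K P = 0 →
        lstarExt K (MonoidAlgebra.mapDomain (fun x => FreeMonoid.map φ x) P) = 0) :=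
  literal_morphism_comm_lstar_general φ
end

section
/- If w is a word with |alph(w)| > ⌈|w|/2⌉, then c(w) = 1; that is, there is a Lie polynomial over ℤ in which w appears with coefficient 1. -/
open MonoidAlgebra

attribute [local instance 100] LieRing.ofAssociativeRing

/-! Write `E(v, w)` for the coefficient of the word `w` in the left-normed bracketing
`[[v₁, v₂], …, vₖ]`. Since `[P, y] = Py − yP`, appending a letter `y` to `v` strips a final `y`
from `w`, or an initial `y` with a minus sign. We find `v` with `E(v, w) = ±1` by induction on
`|w|`, the hypothesis being `|w| + 2 ≤ 2 |alph w|`.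

If the first letter `a` of `w` occurs only once, `E(w, w) = 1`; if `w = a w'` does not end with
`a`, then `E(v a, w) = −E(v, w')`. Otherwise `w = a m a`, and counting shows that at least two
letters are simple, i.e. occur exactly once in `w`. If a simple letter `z` cuts `w = L z R` with
`|R| < |L|`, then `E(v z R, L z R) = E(v, L)`: the other terms of the expansion over `R` are
coefficients `E(v z, x)` of factors `x` of `w` containing `z` strictly inside, and these vanish.
Cutting at the last simple letter, or else at the first one and reading the word backwards
(`E(v, w̃) = ±E(v, w)`), one of the two cuts is available. The hypothesis passes to `L`, because
`a` lies in `L` and in `R`, and the letters of `R` missing from `L` occur at least twice in `R`.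
-/

namespace List

variable {A : Type*}

theorem dropLast_take_drop (w : List A) {p m : ℕ} (h : p + m + 1 ≤ w.length) :
    ((w.drop p).take (m + 1)).dropLast = (w.drop p).take m := by
  rw [dropLast_eq_take, take_take]
  simp only [length_take, length_drop]
  congr 1
  omega

theorem tail_take_drop (w : List A) (p m : ℕ) :
    ((w.drop p).take (m + 1)).tail = (w.drop (p + 1)).take m := by
  rw [← drop_one, drop_take, drop_drop]
  simp

theorem exists_split_at_first {p : A → Prop} {l : List A} (h : ∃ c ∈ l, p c) :
    ∃ α z β, l = α ++ z :: β ∧ p z ∧ ∀ c ∈ α, ¬p c := by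
  induction l with
  | nil => simp at h
  | cons x t ih =>
    by_cases hx : p x
    · exact ⟨[], x, t, rfl, hx, by simp⟩
    · obtain ⟨c, hc, hpc⟩ := h
      obtain ⟨α, z, β, rfl, hz, hα⟩ :=
        ih ⟨c, (mem_cons.mp hc).resolve_left (by rintro rfl; exact hx hpc), hpc⟩
      exact ⟨x :: α, z, β, rfl, hz, forall_mem_cons.mpr ⟨hx, hα⟩⟩

theorem exists_split_at_last {p : A → Prop} {l : List A} (h : ∃ c ∈ l, p c) :
    ∃ α z β, l = α ++ z :: β ∧ p z ∧ ∀ c ∈ β, ¬p c := by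
  obtain ⟨α, z, β, hl, hz, hα⟩ := exists_split_at_first (l := l.reverse) (by simpa using h)
  exact ⟨β.reverse, z, α.reverse, by simpa using congrArg List.reverse hl, hz, by simpa using hα⟩

variable [DecidableEq A]

theorem sum_count_le_length (s : Finset A) (l : List A) : ∑ c ∈ s, l.count c ≤ l.length := by
  calc ∑ c ∈ s, l.count c ≤ ∑ c ∈ s ∪ l.toFinset, l.count c :=
        Finset.sum_le_sum_of_subset Finset.subset_union_left
    _ = l.length := by
        simpa using Multiset.sum_count_eq_card (s := s ∪ l.toFinset) (m := (l : Multiset A))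
          (fun a ha => by simp_all)

theorem not_mem_of_count_append_cons_eq_one {L R : List A} {z : A}
    (h : (L ++ z :: R).count z = 1) : z ∉ L ∧ z ∉ R := by
  simp only [count_append, count_cons_self] at h
  exact ⟨fun hz => by have := count_pos_iff.mpr hz; omega,
    fun hz => by have := count_pos_iff.mpr hz; omega⟩

theorem two_le_card_filter_count_eq_one {w : List A}
    (h : w.length + 2 ≤ 2 * w.toFinset.card) :
    2 ≤ (w.toFinset.filter (fun c => w.count c = 1)).card := by
  have key :
      2 * w.toFinset.card ≤ w.length + (w.toFinset.filter (fun c => w.count c = 1)).card :=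
    calc 2 * w.toFinset.card = ∑ c ∈ w.toFinset, 2 := by simp [mul_comm]
      _ ≤ ∑ c ∈ w.toFinset, (w.count c + if w.count c = 1 then 1 else 0) := by
        refine Finset.sum_le_sum fun c hc => ?_
        have := count_pos_iff.mpr (mem_toFinset.mp hc)
        split_ifs <;> omega
      _ = _ := by
        rw [Finset.sum_add_distrib, sum_toFinset_count_eq_length, Finset.card_filter]
  omega

end List

section

variable {A : Type*}

noncomputable def leftNormed : List A → MonoidAlgebra ℤ (FreeMonoid A)
  | [] => 0
  | x :: s => s.foldl (fun P y => ⁅P, word ℤ [y]⁆) (word ℤ [x])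

noncomputable def leftNormedCoeff (v w : List A) : ℤ :=
  (leftNormed v).coeff (FreeMonoid.ofList w)

theorem leftNormed_append_singleton {v : List A} (hv : v ≠ []) (y : A) :
    leftNormed (v ++ [y]) = ⁅leftNormed v, word ℤ [y]⁆ := by
  obtain ⟨x, s, rfl⟩ := List.exists_cons_of_ne_nil hv
  simp [leftNormed]

theorem leftNormed_mem_freeLie {v : List A} (hv : v ≠ []) : leftNormed v ∈ freeLie ℤ A := by
  induction v using List.reverseRecOn with
  | nil => exact absurd rfl hv
  | append_singleton s y ih =>
    have hy : word ℤ [y] ∈ freeLie ℤ A := LieSubalgebra.subset_lieSpan ⟨y, rfl⟩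
    rcases eq_or_ne s [] with rfl | hs
    · exact hy
    · rw [leftNormed_append_singleton hs]
      exact LieSubalgebra.lie_mem _ (ih hs) hy

@[simp]
theorem leftNormedCoeff_nil (w : List A) : leftNormedCoeff [] w = 0 := by
  simp [leftNormedCoeff, leftNormed]

def HasUnitCoeff (w : List A) : Prop := ∃ v, IsUnit (leftNormedCoeff v w)

theorem ne_nil_of_isUnit_leftNormedCoeff {v w : List A} (h : IsUnit (leftNormedCoeff v w)) :
    v ≠ [] := by
  rintro rfl
  simp at h

variable [DecidableEq A]

theorem coeff_mul_word_singleton_s13 (P : MonoidAlgebra ℤ (FreeMonoid A)) (c : A) (w : List A) :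
    (P * word ℤ [c]).coeff (FreeMonoid.ofList w) =
      if w.getLast? = some c then P.coeff (FreeMonoid.ofList w.dropLast) else 0 := by
  rcases w.eq_nil_or_concat' with rfl | ⟨m, b, rfl⟩
  · refine MonoidAlgebra.coeff_mul_single_of_forall_mul_ne _ _ fun d h => ?_
    simpa using congrArg FreeMonoid.toList h
  · by_cases hb : b = c
    · subst hb
      simp [word, FreeMonoid.ofList_append]
    · simp only [List.getLast?_concat, Option.some.injEq, hb, if_false]
      refine MonoidAlgebra.coeff_mul_single_of_forall_mul_ne _ _ fun d h => hb ?_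
      exact (by simpa using (congrArg FreeMonoid.toList h).symm : _ ∧ b = c).2

theorem coeff_word_singleton_mul_s13 (P : MonoidAlgebra ℤ (FreeMonoid A)) (c : A) (w : List A) :
    (word ℤ [c] * P).coeff (FreeMonoid.ofList w) =
      if w.head? = some c then P.coeff (FreeMonoid.ofList w.tail) else 0 := by
  rcases w with _ | ⟨b, m⟩
  · refine MonoidAlgebra.coeff_single_mul_of_forall_mul_ne _ _ fun d h => ?_
    simpa using congrArg FreeMonoid.toList h
  · by_cases hb : b = c
    · subst hb
      simp [word]
    · simp only [List.head?_cons, Option.some.injEq, hb, if_false]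
      refine MonoidAlgebra.coeff_single_mul_of_forall_mul_ne _ _ fun d h => hb ?_
      exact (by simpa using (congrArg FreeMonoid.toList h).symm : b = c ∧ _).1

theorem leftNormedCoeff_singleton (x : A) (w : List A) :
    leftNormedCoeff [x] w = if w = [x] then 1 else 0 := by
  classical
  simp only [leftNormedCoeff, leftNormed, List.foldl_nil, word, MonoidAlgebra.coeff_single,
    Finsupp.single_apply, FreeMonoid.ofList.injective.eq_iff, eq_comm]

theorem leftNormedCoeff_append_singleton {v : List A} (hv : v ≠ []) (y : A) (w : List A) :
    leftNormedCoeff (v ++ [y]) w =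
      (if w.getLast? = some y then leftNormedCoeff v w.dropLast else 0) -
        if w.head? = some y then leftNormedCoeff v w.tail else 0 := by
  rw [leftNormedCoeff, leftNormed_append_singleton hv, Ring.lie_def, MonoidAlgebra.coeff_sub,
    Finsupp.sub_apply, coeff_mul_word_singleton_s13, coeff_word_singleton_mul_s13]
  rfl

theorem leftNormedCoeff_cons_self {a : A} {t : List A} (ha : a ∉ t) :
    leftNormedCoeff (a :: t) (a :: t) = 1 := by
  induction t using List.reverseRecOn with
  | nil => simp [leftNormedCoeff_singleton]
  | append_singleton s y ih =>
    simp only [List.mem_append, List.mem_singleton, not_or] at ha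
    rw [← List.cons_append, leftNormedCoeff_append_singleton (List.cons_ne_nil a s),
      List.getLast?_concat, if_pos rfl, List.dropLast_concat, ih ha.1]
    simp [ha.2]

theorem leftNormedCoeff_append_singleton_cons {v : List A} (hv : v ≠ []) {a b : A} (hb : b ≠ a)
    (m : List A) :
    leftNormedCoeff (v ++ [a]) (a :: (m ++ [b])) = -leftNormedCoeff v (m ++ [b]) := by
  rw [leftNormedCoeff_append_singleton hv, ← List.cons_append, List.getLast?_concat]
  simp [hb]

theorem leftNormedCoeff_append_singleton_eq_zero {v : List A} (hv : v ≠ []) {z : A}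
    {w : List A} (hhead : w.head? ≠ some z) (hlast : w.getLast? ≠ some z) :
    leftNormedCoeff (v ++ [z]) w = 0 := by
  simp [leftNormedCoeff_append_singleton hv, hhead, hlast]

theorem leftNormedCoeff_reverse (v w : List A) :
    leftNormedCoeff v w.reverse = (-1) ^ (v.length + 1) * leftNormedCoeff v w := by
  induction v using List.reverseRecOn generalizing w with
  | nil => simp
  | append_singleton s y ih =>
    rcases eq_or_ne s [] with rfl | hs
    · simp [leftNormedCoeff_singleton, List.reverse_eq_cons_iff]
    · simp only [leftNormedCoeff_append_singleton hs, List.getLast?_reverse, List.head?_reverse,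
        List.dropLast_reverse, List.tail_reverse, ih, List.length_append, List.length_singleton]
      split_ifs <;> ring

/- `leftNormedCoeff (v ++ u) (w₀ ++ u)` is `leftNormedCoeff v w₀` plus a `ℤ`-combination of the
coefficients of `v` in the other factors of `w₀ ++ u` of length `|w₀|`; `hwin` kills those. -/
theorem leftNormedCoeff_append_append {v : List A} (hv : v ≠ []) (u w₀ : List A)
    (hwin : ∀ p, 1 ≤ p → p ≤ u.length →
      leftNormedCoeff v (((w₀ ++ u).drop p).take w₀.length) = 0) :
    leftNormedCoeff (v ++ u) (w₀ ++ u) = leftNormedCoeff v w₀ := by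
  induction u generalizing v w₀ with
  | nil => simp
  | cons y u ih =>
    have hw : w₀ ++ y :: u = (w₀ ++ [y]) ++ u := by simp
    have hwin' : ∀ p, 1 ≤ p → p ≤ u.length → leftNormedCoeff (v ++ [y])
        ((((w₀ ++ [y]) ++ u).drop p).take (w₀ ++ [y]).length) = 0 := by
      intro p hp1 hpu
      have hlen : p + w₀.length + 1 ≤ (w₀ ++ y :: u).length := by simp; omega
      rw [← hw, List.length_append, List.length_singleton, leftNormedCoeff_append_singleton hv,
        List.dropLast_take_drop _ hlen, List.tail_take_drop, hwin p hp1 (by simp; omega),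
        hwin (p + 1) (by omega) (by simp; omega)]
      simp
    have htail : (w₀ ++ [y]).tail = ((w₀ ++ y :: u).drop 1).take w₀.length := by
      rw [← List.tail_take_drop, List.drop_zero, hw, List.take_left' (by simp)]
    rw [hw, show v ++ y :: u = (v ++ [y]) ++ u by simp, ih (by simp) _ hwin',
      leftNormedCoeff_append_singleton hv, htail, hwin 1 le_rfl (by simp)]
    simp

theorem leftNormedCoeff_append_cons_of_length_lt {v : List A} (hv : v ≠ []) {L R : List A}
    {z : A} (hzL : z ∉ L) (hzR : z ∉ R) (hlt : R.length < L.length) :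
    leftNormedCoeff (v ++ z :: R) (L ++ z :: R) = leftNormedCoeff v L := by
  have hL : L ≠ [] := List.ne_nil_of_length_pos (by omega)
  have hwin : ∀ p, 1 ≤ p → p ≤ R.length →
      leftNormedCoeff (v ++ [z]) ((((L ++ [z]) ++ R).drop p).take (L ++ [z]).length) = 0 := by
    intro p hp1 hpR
    have hx : (((L ++ [z]) ++ R).drop p).take (L ++ [z]).length = L.drop p ++ z :: R.take p := by
      rw [List.append_assoc, List.drop_append_of_le_length (by omega), List.take_append]
      simp only [List.length_drop, List.length_append, List.length_singleton]
      rw [List.take_of_length_le (by simp; omega),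
        show L.length + 1 - (L.length - p) = p + 1 by omega]
      simp
    have hLp : L.drop p ≠ [] := by simp; omega
    have hRp : R.take p ≠ [] := List.ne_nil_of_length_pos (by simp; omega)
    rw [hx]
    refine leftNormedCoeff_append_singleton_eq_zero hv ?_ ?_
    · rw [List.head?_append_of_ne_nil _ hLp]
      exact fun h => hzL (List.mem_of_mem_drop (List.mem_of_mem_head? h))
    · rw [← List.singleton_append, ← List.append_assoc, List.getLast?_append_of_ne_nil _ hRp]
      exact fun h => hzR (List.mem_of_mem_take (List.mem_of_mem_getLast? h))
  rw [show v ++ z :: R = (v ++ [z]) ++ R by simp, show L ++ z :: R = (L ++ [z]) ++ R by simp,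
    leftNormedCoeff_append_append (by simp) _ _ hwin, leftNormedCoeff_append_singleton hv,
    List.getLast?_concat, if_pos rfl, List.dropLast_concat, List.head?_append_of_ne_nil _ hL]
  have hhead : L.head? ≠ some z := fun h => hzL (List.mem_of_mem_head? h)
  simp [hhead]

theorem hasUnitCoeff_cons_of_not_mem {a : A} {t : List A} (ha : a ∉ t) :
    HasUnitCoeff (a :: t) :=
  ⟨a :: t, by rw [leftNormedCoeff_cons_self ha]; exact isUnit_one⟩

theorem HasUnitCoeff.cons_append_singleton {m : List A} {a b : A} (hb : b ≠ a)
    (h : HasUnitCoeff (m ++ [b])) : HasUnitCoeff (a :: (m ++ [b])) := by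
  obtain ⟨v, hv⟩ := h
  refine ⟨v ++ [a], ?_⟩
  rw [leftNormedCoeff_append_singleton_cons (ne_nil_of_isUnit_leftNormedCoeff hv) hb]
  exact hv.neg

theorem HasUnitCoeff.reverse {w : List A} (h : HasUnitCoeff w) : HasUnitCoeff w.reverse := by
  obtain ⟨v, hv⟩ := h
  exact ⟨v, by rw [leftNormedCoeff_reverse]; exact (isUnit_neg_one.pow _).mul hv⟩

theorem hasUnitCoeff_reverse_iff {w : List A} : HasUnitCoeff w.reverse ↔ HasUnitCoeff w :=
  ⟨fun h => w.reverse_reverse ▸ h.reverse, HasUnitCoeff.reverse⟩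

theorem HasUnitCoeff.append_cons_of_length_lt {L R : List A} {z : A} (hzL : z ∉ L)
    (hzR : z ∉ R) (hlt : R.length < L.length) (h : HasUnitCoeff L) :
    HasUnitCoeff (L ++ z :: R) := by
  obtain ⟨v, hv⟩ := h
  refine ⟨v ++ z :: R, ?_⟩
  rwa [leftNormedCoeff_append_cons_of_length_lt (ne_nil_of_isUnit_leftNormedCoeff hv) hzL hzR hlt]

theorem HasUnitCoeff.append_cons_of_length_lt' {L R : List A} {z : A} (hzL : z ∉ L)
    (hzR : z ∉ R) (hlt : L.length < R.length) (h : HasUnitCoeff R) :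
    HasUnitCoeff (L ++ z :: R) := by
  rw [← hasUnitCoeff_reverse_iff]
  simpa using h.reverse.append_cons_of_length_lt (z := z) (R := L.reverse)
    (by simpa using hzR) (by simpa using hzL) (by simpa using hlt)

theorem length_add_two_le_of_append_cons {L R : List A} {z a : A} (haL : a ∈ L)
    (haR : a ∈ R) (hzR : z ∉ R) (hR : ∀ c ∈ R, (L ++ z :: R).count c ≠ 1)
    (h : (L ++ z :: R).length + 2 ≤ 2 * (L ++ z :: R).toFinset.card) :
    L.length + 2 ≤ 2 * L.toFinset.card := by
  set B := R.toFinset \ L.toFinset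
  have hcard : (L ++ z :: R).toFinset.card ≤ L.toFinset.card + B.card + 1 :=
    calc _ ≤ (insert z (L.toFinset ∪ B)).card :=
          Finset.card_le_card fun c => by simp [B]
      _ ≤ (L.toFinset ∪ B).card + 1 := Finset.card_insert_le _ _
      _ ≤ _ := by have := Finset.card_union_le L.toFinset B; omega
  have hB : ∀ c ∈ B, 2 ≤ R.count c := by
    intro c hc
    simp only [B, Finset.mem_sdiff, List.mem_toFinset] at hc
    have hcz : c ≠ z := fun e => hzR (e ▸ hc.1)
    have hcount : (L ++ z :: R).count c = R.count c := by
      simp [List.count_append, List.count_eq_zero.mpr hc.2, Ne.symm hcz]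
    have := hR c hc.1
    have := List.count_pos_iff.mpr hc.1
    omega
  have hsum : 2 * B.card + 1 ≤ R.length :=
    calc 2 * B.card + 1 ≤ ∑ c ∈ B, R.count c + R.count a := by
          have := Finset.card_nsmul_le_sum B (R.count ·) 2 hB
          have := List.count_pos_iff.mpr haR
          simp only [smul_eq_mul] at *
          omega
      _ = ∑ c ∈ insert a B, R.count c := by
          rw [Finset.sum_insert (by simp [B, haL]), add_comm]
      _ ≤ R.length := List.sum_count_le_length _ _
  simp only [List.length_append, List.length_cons] at h
  omega

theorem length_add_two_le_of_append_cons' {L R : List A} {z a : A} (haL : a ∈ L)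
    (haR : a ∈ R) (hzL : z ∉ L) (hL : ∀ c ∈ L, (L ++ z :: R).count c ≠ 1)
    (h : (L ++ z :: R).length + 2 ≤ 2 * (L ++ z :: R).toFinset.card) :
    R.length + 2 ≤ 2 * R.toFinset.card := by
  have hrev : R.reverse ++ z :: L.reverse = (L ++ z :: R).reverse := by simp
  simpa using length_add_two_le_of_append_cons (L := R.reverse) (R := L.reverse) (a := a)
    (List.mem_reverse.mpr haR) (List.mem_reverse.mpr haL) (mt List.mem_reverse.mp hzL)
    (fun c hc => by rw [hrev, List.count_reverse]; exact hL c (List.mem_reverse.mp hc))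
    (by rwa [hrev, List.length_reverse, List.toFinset_reverse])

theorem hasUnitCoeff_append_cons {L R : List A} {z a : A} (hz : (L ++ z :: R).count z = 1)
    (haL : a ∈ L) (haR : a ∈ R) (hR : ∀ c ∈ R, (L ++ z :: R).count c ≠ 1)
    (hlt : R.length < L.length)
    (h : (L ++ z :: R).length + 2 ≤ 2 * (L ++ z :: R).toFinset.card)
    (ih : ∀ w : List A, w.length < (L ++ z :: R).length →
      w.length + 2 ≤ 2 * w.toFinset.card → HasUnitCoeff w) :
    HasUnitCoeff (L ++ z :: R) := by
  obtain ⟨hzL, hzR⟩ := List.not_mem_of_count_append_cons_eq_one hz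
  exact (ih L (by simp) (length_add_two_le_of_append_cons haL haR hzR hR h))
    |>.append_cons_of_length_lt hzL hzR hlt

theorem hasUnitCoeff_append_cons' {L R : List A} {z a : A} (hz : (L ++ z :: R).count z = 1)
    (haL : a ∈ L) (haR : a ∈ R) (hL : ∀ c ∈ L, (L ++ z :: R).count c ≠ 1)
    (hlt : L.length < R.length)
    (h : (L ++ z :: R).length + 2 ≤ 2 * (L ++ z :: R).toFinset.card)
    (ih : ∀ w : List A, w.length < (L ++ z :: R).length →
      w.length + 2 ≤ 2 * w.toFinset.card → HasUnitCoeff w) :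
    HasUnitCoeff (L ++ z :: R) := by
  obtain ⟨hzL, hzR⟩ := List.not_mem_of_count_append_cons_eq_one hz
  exact (ih R (by simp; omega) (length_add_two_le_of_append_cons' haL haR hzL hL h))
    |>.append_cons_of_length_lt' hzL hzR hlt

theorem hasUnitCoeff_cons_append_singleton_self {a : A} {m : List A}
    (h : (a :: (m ++ [a])).length + 2 ≤ 2 * (a :: (m ++ [a])).toFinset.card)
    (ih : ∀ w : List A, w.length < (a :: (m ++ [a])).length →
      w.length + 2 ≤ 2 * w.toFinset.card → HasUnitCoeff w) :
    HasUnitCoeff (a :: (m ++ [a])) := by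
  set w := a :: (m ++ [a])
  have ha : w.count a ≠ 1 := by simp [w, List.count_append]
  have hmem : ∀ c, w.count c = 1 → c ∈ m := by
    intro c hc
    have hca : c ≠ a := by rintro rfl; exact ha hc
    simpa [w, hca] using List.count_pos_iff.mp (show 0 < w.count c by omega)
  obtain ⟨c₁, hc₁, c₂, hc₂, hne⟩ :=
    Finset.one_lt_card.mp (List.two_le_card_filter_count_eq_one h)
  simp only [Finset.mem_filter, List.mem_toFinset] at hc₁ hc₂
  obtain ⟨α, z, β, hm, hz, hβ⟩ :=
    List.exists_split_at_last (p := fun c => w.count c = 1) ⟨c₁, hmem c₁ hc₁.2, hc₁.2⟩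
  rcases lt_or_ge β.length α.length with hlt | hle
  · have hwz : w = (a :: α) ++ z :: (β ++ [a]) := by simp [w, hm]
    have hR : ∀ c ∈ β ++ [a], w.count c ≠ 1 := by
      simpa only [List.forall_mem_append, List.forall_mem_singleton] using ⟨hβ, ha⟩
    rw [hwz] at h ih hz hR ⊢
    exact hasUnitCoeff_append_cons hz List.mem_cons_self (by simp) hR (by simpa using hlt) h ih
  -- `z` is not past the middle of `w`; the first simple letter lies in `α`, strictly before it.
  obtain ⟨c, hcw, hcz⟩ : ∃ c, w.count c = 1 ∧ c ≠ z := by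
    by_cases h₁ : c₁ = z
    · exact ⟨c₂, hc₂.2, fun h₂ => hne (h₁.trans h₂.symm)⟩
    · exact ⟨c₁, hc₁.2, h₁⟩
  have hcα : c ∈ α := by
    have := hmem c hcw
    simp only [hm, List.mem_append, List.mem_cons] at this
    exact this.elim id fun h' => h'.elim (absurd · hcz) fun hβc => absurd hcw (hβ c hβc)
  obtain ⟨α₁, z', α₂, hα, hz', hα₁⟩ :=
    List.exists_split_at_first (p := fun c => w.count c = 1) ⟨c, hcα, hcw⟩
  have hwz : w = (a :: α₁) ++ z' :: (α₂ ++ z :: β ++ [a]) := by simp [w, hm, hα]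
  have hL : ∀ c ∈ a :: α₁, w.count c ≠ 1 := List.forall_mem_cons.mpr ⟨ha, hα₁⟩
  have hα_len : α.length = α₁.length + 1 + α₂.length := by simp [hα]; omega
  rw [hwz] at h ih hz' hL ⊢
  exact hasUnitCoeff_append_cons' hz' List.mem_cons_self (by simp) hL (by simp; omega) h ih

theorem hasUnitCoeff_of_length_add_two_le (w : List A)
    (h : w.length + 2 ≤ 2 * w.toFinset.card) :
    HasUnitCoeff w := by
  induction hn : w.length using Nat.strong_induction_on generalizing w with
  | _ n ih =>
    subst hn
    obtain ⟨a, t, rfl⟩ := List.exists_cons_of_ne_nil (show w ≠ [] by rintro rfl; simp at h)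
    by_cases hat : a ∉ t
    · exact hasUnitCoeff_cons_of_not_mem hat
    rw [not_not] at hat
    obtain ⟨m, b, rfl⟩ := (t.eq_nil_or_concat').resolve_left (by rintro rfl; simp at hat)
    have ih' : ∀ w : List A, w.length < (a :: (m ++ [b])).length →
        w.length + 2 ≤ 2 * w.toFinset.card → HasUnitCoeff w := fun w hw h' => ih _ hw w h' rfl
    by_cases hb : b = a
    · subst hb
      exact hasUnitCoeff_cons_append_singleton_self h ih'
    · refine (ih' _ (by simp) ?_).cons_append_singleton hb
      rw [List.toFinset_cons, Finset.insert_eq_of_mem (List.mem_toFinset.mpr hat)] at h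
      simp only [List.length_cons] at h
      omega

end

theorem exists_lie_poly_coeff_one_general {A : Type*} [DecidableEq A]
    (w : List A) (hw : (w.length + 1) / 2 < w.toFinset.card) :
    ∃ Q ∈ freeLie ℤ A, Q.coeff (FreeMonoid.ofList w) = 1 := by
  obtain ⟨v, hv⟩ := hasUnitCoeff_of_length_add_two_le w (by omega)
  refine ⟨leftNormedCoeff v w • leftNormed v,
    LieSubalgebra.smul_mem _ _ (leftNormed_mem_freeLie (ne_nil_of_isUnit_leftNormedCoeff hv)), ?_⟩
  rw [MonoidAlgebra.coeff_smul, Finsupp.smul_apply, smul_eq_mul]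
  exact Int.isUnit_mul_self hv

/-- if `|alph(w)| > ⌈|w|/2⌉` then `c(w) = 1`, i.e. there is a Lie
polynomial over `ℤ` in which `w` appears with coefficient `1`. -/
theorem exists_lie_poly_coeff_one {A : Type*} [Fintype A] [DecidableEq A]
    (w : List A) (hw : (w.length + 1) / 2 < w.toFinset.card) :
    ∃ Q ∈ freeLie ℤ A, Q.coeff (FreeMonoid.ofList w) = 1 :=
  exists_lie_poly_coeff_one_general w hw
end

section
/- For a subset I of {1,…,n}, the homogeneous multilinear polynomial hₙ(I) := ψ(lₙ·Ī) ∈ ℤ[x₁,…,xₙ] is divisible by x₁ − x₂, and the quotient pₙ(I) satisfies: pₙ({i}) = (−1)^{i−1} C(n−1, i−1) for singletons, and pₙ(I) = p_{n−1}(I) − p_{n−1}(ζₙ I) otherwise, with the convention p_{n−1}(I') = p_{n−1}(I'∖{n})·xₙ whenever n ∈ I'. -/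
open MvPolynomial

/-- The left-normed multilinear Lie bracketing `lₙ = (1 − ζ₂)(1 − ζ₃)⋯(1 − ζₙ)` in the
group ring `ℤSₙ`, where `ζₖ` is the descending cycle `(k … 2 1)`. -/
noncomputable def lnZ (n : ℕ) : MonoidAlgebra ℤ (Equiv.Perm (Fin n)) :=
  (((List.finRange n).drop 1).map fun i =>
      (1 : MonoidAlgebra ℤ (Equiv.Perm (Fin n))) -
        MonoidAlgebra.of ℤ (Equiv.Perm (Fin n)) (Fin.cycleRange i)⁻¹).prod

/-- The action of `σ ∈ Sₙ` on a 1-indexed position `i ∈ [n] = {1, …, n}`. -/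
def pact (n : ℕ) (σ : Equiv.Perm (Fin n)) (i : ℕ) : ℕ :=
  if h : 1 ≤ i ∧ i ≤ n then (σ ⟨i - 1, by omega⟩).val + 1 else i

/-- `hₙ(I) = ψ(lₙ·Ī) ∈ ℤ[x₁, …, xₙ]`, where `Ī` is the 2-block ordered partition
`([n] ∖ I, I)` and `ψ` sends `σ·Ī` to the monomial `x_{σ(I)} = ∏_{i ∈ I} x_{σ(i)}`. -/
noncomputable def hpoly (n : ℕ) (I : Finset ℕ) : MvPolynomial ℕ ℤ :=
  (lnZ n).coeff.sum fun σ c => c • ∏ i ∈ I, X (pact n σ i)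

/-- The descending cycle `ζₙ = (n … 2 1)` acting on 1-indexed positions. -/
def zetaN (n : ℕ) (i : ℕ) : ℕ :=
  if i = 1 then n else if 2 ≤ i ∧ i ≤ n then i - 1 else i

/-- The convention `p_{n−1}(I') = p_{n−1}(I' ∖ {n})·xₙ` whenever `n ∈ I'`. -/
noncomputable def paux (p : Finset ℕ → MvPolynomial ℕ ℤ) (n : ℕ) (J : Finset ℕ) :
    MvPolynomial ℕ ℤ :=
  if n ∈ J then p (J.erase n) * X n else p J

/-- The Pascal descent polynomial `pₙ(I)`, defined by the recursion
`pₙ({i}) = (−1)^{i−1} C(n−1, i−1)` and `pₙ(I) = p_{n−1}(I) − p_{n−1}(ζₙ I)` otherwise,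
with the convention `p_{n−1}(I') = p_{n−1}(I' ∖ {n})·xₙ` whenever `n ∈ I'`. -/
noncomputable def pdef : ℕ → Finset ℕ → MvPolynomial ℕ ℤ
  | 0, _ => 0
  | n + 1, I =>
    if h1 : I.card = 1 then
      C ((-1 : ℤ) ^ (I.min' (Finset.card_pos.mp (by omega)) - 1) *
        (n.choose (I.min' (Finset.card_pos.mp (by omega)) - 1) : ℤ))
    else
      paux (pdef n) (n + 1) I - paux (pdef n) (n + 1) (I.image (zetaN (n + 1)))

/-!
Peeling the last factor `1 − ζₙ` off `lₙ` gives `hₙ(I) = h_{n−1}(I) − h_{n−1}(ζₙ I)`, where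
`h_{n−1}` is computed inside `Sₙ`; as `S_{n−1}` fixes `n`, `h_{n−1}(J) = h_{n−1}(J ∖ {n})·xₙ`
when `n ∈ J`. This is the recursion defining `pₙ`, so `hₙ(I) = (x₁ − x₂)·pₙ(I)` follows by
induction on `n` from `h₂(I) = x_I − x_{ζ₂ I}`. On singletons the recursion of `pₙ` is Pascal's
rule, with `C(n−2, n−1) = 0` accounting for `p_{n−1}({n}) = p_{n−1}(∅)·xₙ = 0`.
-/

open Finset

lemma zetaN_injective {k : ℕ} (hk : 1 ≤ k) : Function.Injective (zetaN k) := by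
  intro a b h
  unfold zetaN at h
  split_ifs at h <;> omega

lemma zetaN_of_lt {k m : ℕ} (hk : 1 ≤ k) (hkm : k < m) : zetaN k m = m := by
  unfold zetaN
  split_ifs <;> omega

lemma image_zetaN_subset_Icc {n : ℕ} {I : Finset ℕ} (hI : I ⊆ Icc 1 n) :
    I.image (zetaN n) ⊆ Icc 1 n := by
  intro x hx
  obtain ⟨i, hi, rfl⟩ := mem_image.mp hx
  have := mem_Icc.mp (hI hi)
  rw [mem_Icc]
  unfold zetaN
  split_ifs <;> omega

lemma subset_Icc_of_notMem {n : ℕ} {I : Finset ℕ} (hI : I ⊆ Icc 1 (n + 1)) (hn : n + 1 ∉ I) :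
    I ⊆ Icc 1 n := by
  intro x hx
  have := mem_Icc.mp (hI hx)
  have : x ≠ n + 1 := fun h => hn (h ▸ hx)
  rw [mem_Icc]
  omega

section Action

variable {n : ℕ}

lemma pact_one (i : ℕ) : pact n 1 i = i := by
  unfold pact
  split_ifs
  · simp only [Equiv.Perm.one_apply]; omega
  · rfl

lemma pact_mul (σ τ : Equiv.Perm (Fin n)) (i : ℕ) :
    pact n (σ * τ) i = pact n σ (pact n τ i) := by
  unfold pact
  split_ifs <;> simp_all

lemma pact_injective (σ : Equiv.Perm (Fin n)) : Function.Injective (pact n σ) :=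
  Function.LeftInverse.injective (g := pact n σ⁻¹) fun i => by
    rw [← pact_mul, inv_mul_cancel, pact_one]

lemma Fin.coe_cycleRange (j x : Fin n) :
    (Fin.cycleRange j x : ℕ) = if x < j then (x : ℕ) + 1 else if x = j then 0 else (x : ℕ) := by
  split_ifs with hlt heq
  · exact Fin.coe_cycleRange_of_lt hlt
  · rw [Fin.coe_cycleRange_of_le heq.le, if_pos heq]
  · rw [Fin.cycleRange_of_gt (lt_of_le_of_ne (not_lt.mp hlt) (Ne.symm heq))]

lemma pact_cycleRange_inv (j : Fin n) (i : ℕ) :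
    pact n (Fin.cycleRange j)⁻¹ i = zetaN (j.val + 1) i := by
  have := j.isLt
  unfold pact zetaN
  by_cases hi : 1 ≤ i ∧ i ≤ n
  · rw [dif_pos hi]
    set y := (Fin.cycleRange j)⁻¹ ⟨i - 1, by omega⟩
    have hy : (Fin.cycleRange j y : ℕ) = i - 1 := by simp [y]
    rw [Fin.coe_cycleRange] at hy
    simp only [Fin.lt_def, Fin.ext_iff] at hy
    split_ifs at hy ⊢ <;> omega
  · rw [dif_neg hi]
    split_ifs <;> omega

end Action

section Psi

variable (n : ℕ) (I : Finset ℕ)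

/-- `psi n I a = ψ(a·Ī)`. -/
noncomputable def psi : MonoidAlgebra ℤ (Equiv.Perm (Fin n)) →ₗ[ℤ] MvPolynomial ℕ ℤ :=
  (MonoidAlgebra.basis _ ℤ).constr ℤ fun σ => ∏ i ∈ I, X (pact n σ i)

lemma hpoly_eq_psi : hpoly n I = psi n I (lnZ n) := by
  rw [psi, Module.Basis.constr_apply]
  rfl

lemma psi_of (σ : Equiv.Perm (Fin n)) :
    psi n I (MonoidAlgebra.of ℤ _ σ) = ∏ i ∈ I, X (pact n σ i) := by
  rw [MonoidAlgebra.of_apply, ← MonoidAlgebra.basis_apply, psi, Module.Basis.constr_basis]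

lemma psi_one : psi n I 1 = ∏ i ∈ I, X i := by
  rw [← map_one (MonoidAlgebra.of ℤ _), psi_of]
  simp only [pact_one]

lemma psi_mul_of (a : MonoidAlgebra ℤ (Equiv.Perm (Fin n))) (g : Equiv.Perm (Fin n)) :
    psi n I (a * MonoidAlgebra.of ℤ _ g) = psi n (I.image (pact n g)) a := by
  suffices (psi n I).comp (LinearMap.mulRight ℤ (MonoidAlgebra.of ℤ _ g)) =
      psi n (I.image (pact n g)) from LinearMap.congr_fun this a
  refine (MonoidAlgebra.basis _ ℤ).ext fun σ => ?_
  rw [LinearMap.comp_apply, LinearMap.mulRight_apply, MonoidAlgebra.basis_apply,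
    ← MonoidAlgebra.of_apply, ← map_mul, psi_of, psi_of,
    prod_image fun x _ y _ h => pact_injective g h]
  simp only [pact_mul]

end Psi

/-- `bracketPoly [kᵣ, …, k₁] I = ψ((1 − ζ_{k₁})⋯(1 − ζ_{kᵣ})·Ī)`: the head of the list is the
last factor, the one that acts first on `Ī`. -/
noncomputable def bracketPoly : List ℕ → Finset ℕ → MvPolynomial ℕ ℤ
  | [], I => ∏ i ∈ I, X i
  | k :: ks, I => bracketPoly ks I - bracketPoly ks (I.image (zetaN k))

lemma psi_prod_one_sub_of (n : ℕ) (l : List (Fin n)) (I : Finset ℕ) :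
    psi n I (l.map fun j => 1 - MonoidAlgebra.of ℤ _ (Fin.cycleRange j)⁻¹).prod =
      bracketPoly (l.map fun j => j.val + 1).reverse I := by
  induction l using List.reverseRecOn generalizing I with
  | nil => exact psi_one n I
  | append_singleton l j ih =>
    simp only [List.map_append, List.prod_append, List.map_singleton, List.prod_singleton,
      List.reverse_append, List.reverse_singleton, List.singleton_append, mul_sub, mul_one,
      map_sub, psi_mul_of, ih, bracketPoly]
    congr 2
    exact image_congr fun i _ => pact_cycleRange_inv j i

lemma map_succ_drop_one_finRange (n : ℕ) :
    ((List.finRange n).drop 1).map (fun j : Fin n => j.val + 1) = List.range' 2 (n - 1) := by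
  cases n with
  | zero => rfl
  | succ m =>
    simp only [List.finRange_succ, List.drop_succ_cons, List.drop_zero, List.map_map,
      Nat.add_sub_cancel, List.range'_eq_map_range, ← List.map_coe_finRange_eq_range]
    exact List.map_congr_left fun j _ => by simp; omega

lemma hpoly_eq_bracketPoly (n : ℕ) (I : Finset ℕ) :
    hpoly n I = bracketPoly (List.range' 2 (n - 1)).reverse I := by
  rw [hpoly_eq_psi, lnZ, psi_prod_one_sub_of, map_succ_drop_one_finRange]

lemma hpoly_of_le_one {n : ℕ} (hn : n ≤ 1) (I : Finset ℕ) : hpoly n I = ∏ i ∈ I, X i := by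
  rw [hpoly_eq_bracketPoly, Nat.sub_eq_zero_of_le hn]
  rfl

lemma hpoly_succ {n : ℕ} (hn : 1 ≤ n) (I : Finset ℕ) :
    hpoly (n + 1) I = hpoly n I - hpoly n (I.image (zetaN (n + 1))) := by
  obtain ⟨m, rfl⟩ := Nat.exists_eq_add_of_le' hn
  simp only [hpoly_eq_bracketPoly, Nat.add_sub_cancel, List.range'_concat, List.reverse_append]
  rw [show 2 + 1 * m = m + 1 + 1 by ring]
  rfl

lemma hpoly_eq_mul_X {n m : ℕ} (hnm : n < m) {I : Finset ℕ} (hm : m ∈ I) :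
    hpoly n I = hpoly n (I.erase m) * X m := by
  induction n generalizing I with
  | zero => rw [hpoly_of_le_one zero_le_one, hpoly_of_le_one zero_le_one, prod_erase_mul _ _ hm]
  | succ n ih =>
    rcases Nat.eq_zero_or_pos n with rfl | hn
    · rw [hpoly_of_le_one le_rfl, hpoly_of_le_one le_rfl, prod_erase_mul _ _ hm]
    have hfix : zetaN (n + 1) m = m := zetaN_of_lt (by omega) hnm
    have himage : (I.image (zetaN (n + 1))).erase m = (I.erase m).image (zetaN (n + 1)) := by
      rw [image_erase (zetaN_injective (by omega)), hfix]
    rw [hpoly_succ hn, hpoly_succ hn, ih (by omega) hm,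
      ih (by omega) (mem_image.mpr ⟨m, hm, hfix⟩), himage, sub_mul]

lemma pdef_empty (n : ℕ) : pdef n ∅ = 0 := by
  cases n with
  | zero => rfl
  | succ n => rw [pdef, dif_neg (by simp), image_empty, sub_self]

lemma pdef_succ_singleton (m i : ℕ) :
    pdef (m + 1) {i} = C ((-1 : ℤ) ^ (i - 1) * (m.choose (i - 1) : ℤ)) := by
  rw [pdef, dif_pos (card_singleton i)]
  simp only [min'_singleton]

lemma pdef_succ_of_card_ne_one (m : ℕ) {I : Finset ℕ} (h : I.card ≠ 1) :
    pdef (m + 1) I =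
      paux (pdef m) (m + 1) I - paux (pdef m) (m + 1) (I.image (zetaN (m + 1))) := by
  rw [pdef, dif_neg h]

lemma paux_pdef_singleton (m i : ℕ) :
    paux (pdef (m + 1)) (m + 2) {i} = C ((-1 : ℤ) ^ (i - 1) * (m.choose (i - 1) : ℤ)) := by
  unfold paux
  split_ifs with h
  · obtain rfl := mem_singleton.mp h
    rw [erase_singleton, pdef_empty, zero_mul, show m + 2 - 1 = m + 1 by omega,
      Nat.choose_succ_self, Nat.cast_zero, mul_zero, map_zero]
  · exact pdef_succ_singleton m i

lemma pdef_singleton_eq_paux_sub {m i : ℕ} (hi : i ∈ Icc 1 (m + 2)) :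
    pdef (m + 2) {i} =
      paux (pdef (m + 1)) (m + 2) {i} - paux (pdef (m + 1)) (m + 2) {zetaN (m + 2) i} := by
  rw [pdef_succ_singleton, paux_pdef_singleton, paux_pdef_singleton, ← map_sub]
  congr 1
  obtain ⟨hi1, hi2⟩ := mem_Icc.mp hi
  obtain rfl | ⟨j, rfl⟩ : i = 1 ∨ ∃ j, i = j + 2 := by
    rcases i with _ | _ | j <;> simp_all
  · rw [show zetaN (m + 2) 1 = m + 2 from rfl, show m + 2 - 1 = m + 1 by omega,
      Nat.choose_succ_self]
    simp
  · have hz : zetaN (m + 2) (j + 2) = j + 1 := by unfold zetaN; split_ifs <;> omega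
    rw [hz, show j + 2 - 1 = j + 1 by omega, Nat.add_sub_cancel, Nat.choose_succ_succ']
    push_cast
    ring

lemma pdef_succ {n : ℕ} (hn : 1 ≤ n) {I : Finset ℕ} (hI : I ⊆ Icc 1 (n + 1)) :
    pdef (n + 1) I =
      paux (pdef n) (n + 1) I - paux (pdef n) (n + 1) (I.image (zetaN (n + 1))) := by
  by_cases h : I.card = 1
  · obtain ⟨i, rfl⟩ := card_eq_one.mp h
    obtain ⟨m, rfl⟩ := Nat.exists_eq_add_of_le' hn
    rw [image_singleton]
    exact pdef_singleton_eq_paux_sub (hI (mem_singleton_self i))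
  · exact pdef_succ_of_card_ne_one n h

lemma hpoly_eq_mul_paux {n : ℕ} (ih : ∀ I ⊆ Icc 1 n, hpoly n I = (X 1 - X 2) * pdef n I)
    {J : Finset ℕ} (hJ : J ⊆ Icc 1 (n + 1)) :
    hpoly n J = (X 1 - X 2) * paux (pdef n) (n + 1) J := by
  unfold paux
  split_ifs with h
  · rw [hpoly_eq_mul_X (Nat.lt_add_one n) h,
      ih _ (subset_Icc_of_notMem ((erase_subset _ _).trans hJ) (notMem_erase _ _)), mul_assoc]
  · exact ih J (subset_Icc_of_notMem hJ h)

lemma hpoly_two {I : Finset ℕ} (hI : I ⊆ Icc 1 2) : hpoly 2 I = (X 1 - X 2) * pdef 2 I := by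
  have hI' : I ∈ ({∅, {1}, {2}, {1, 2}} : Finset (Finset ℕ)) := by
    rw [show ({∅, {1}, {2}, {1, 2}} : Finset (Finset ℕ)) = (Icc 1 2).powerset by decide]
    exact mem_powerset.mpr hI
  rw [hpoly_succ le_rfl, hpoly_of_le_one le_rfl, hpoly_of_le_one le_rfl]
  simp only [mem_insert, mem_singleton] at hI'
  rcases hI' with rfl | rfl | rfl | rfl
  · rw [image_empty, sub_self, pdef_empty, mul_zero]
  · simp [pdef_succ_singleton, zetaN]
  · simp [pdef_succ_singleton, zetaN]
  · have himage : ({1, 2} : Finset ℕ).image (zetaN 2) = {1, 2} := by decide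
    rw [pdef_succ_of_card_ne_one 1 (by decide), himage, sub_self, sub_self, mul_zero]

lemma hpoly_eq_mul_pdef {n : ℕ} (hn : 2 ≤ n) {I : Finset ℕ} (hI : I ⊆ Icc 1 n) :
    hpoly n I = (X 1 - X 2) * pdef n I := by
  induction n, hn using Nat.le_induction generalizing I with
  | base => exact hpoly_two hI
  | succ n hn ih =>
    rw [hpoly_succ (by omega), pdef_succ (by omega) hI, mul_sub,
      hpoly_eq_mul_paux (fun J hJ => ih hJ) hI,
      hpoly_eq_mul_paux (fun J hJ => ih hJ) (image_zetaN_subset_Icc hI)]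

/-- `hₙ(I)` is divisible by `x₁ − x₂`, and the quotient `pₙ(I)` satisfies
`pₙ({i}) = (−1)^{i−1} C(n−1, i−1)` for singletons and
`pₙ(I) = p_{n−1}(I) − p_{n−1}(ζₙ I)` otherwise (with the convention
`p_{n−1}(I') = p_{n−1}(I' ∖ {n})·xₙ` whenever `n ∈ I'`). -/
theorem hpoly_eq_sub_mul_pdef (n : ℕ) (hn : 2 ≤ n) (I : Finset ℕ)
    (hI : I ⊆ Finset.Icc 1 n) :
    (X 1 - X 2 ∣ hpoly n I) ∧
    hpoly n I = (X 1 - X 2) * pdef n I ∧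
    (∀ i : ℕ, I = {i} →
      pdef n I = C ((-1 : ℤ) ^ (i - 1) * ((n - 1).choose (i - 1) : ℤ))) ∧
    (I.card ≠ 1 →
      pdef n I =
        paux (pdef (n - 1)) n I - paux (pdef (n - 1)) n (I.image (zetaN n))) := by
  have hmul : hpoly n I = (X 1 - X 2) * pdef n I := hpoly_eq_mul_pdef hn hI
  obtain ⟨m, rfl⟩ := Nat.exists_eq_add_of_le' (one_le_two.trans hn)
  refine ⟨⟨pdef (m + 1) I, hmul⟩, hmul, fun i hi => ?_, fun hcard => ?_⟩
  · rw [hi, pdef_succ_singleton, Nat.add_sub_cancel]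
  · rw [pdef_succ_of_card_ne_one m hcard, Nat.add_sub_cancel]
end
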